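/- arXiv:2012.06636 — 5 statements merged into one kernel-verified Lean document; each statement's English description precedes it below -/
import Mathlib

section
/- Let G be a topological fan quasigroup whose topology is T1. Then the fan N₀ = N₀(G) is a closed normal subgroup of G; that is, N₀ is a closed subgroup of G satisfying xN₀ = N₀x, (xy)N₀ = x(yN₀), (xN₀)y = x(N₀y) and N₀(xy) = (N₀x)y for all x, y ∈ G. -/
/-- The left nucleus of a binary operation. -/
def leftNucleus {G : Type*} (mul : G → G → G) : Set G :=
  {a | ∀ b c, mul (mul a b) c = mul a (mul b c)}

/-- The middle nucleus of a binary operation. -/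
def midNucleus {G : Type*} (mul : G → G → G) : Set G :=
  {a | ∀ b c, mul (mul b a) c = mul b (mul a c)}

/-- The right nucleus of a binary operation. -/
def rightNucleus {G : Type*} (mul : G → G → G) : Set G :=
  {a | ∀ b c, mul (mul b c) a = mul b (mul c a)}

/-- The nucleus `N(G)` of a binary operation. -/
def nucleusSet {G : Type*} (mul : G → G → G) : Set G :=
  leftNucleus mul ∩ midNucleus mul ∩ rightNucleus mul

/-- The commutant `Com(G)` of a binary operation. -/
def comSet {G : Type*} (mul : G → G → G) : Set G :=
  {a | ∀ b, mul a b = mul b a}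

/-- The center `C(G) = Com(G) ∩ N(G)` of a binary operation. -/
def centerSet {G : Type*} (mul : G → G → G) : Set G :=
  comSet mul ∩ nucleusSet mul

/-- A fan quasigroup: a unital quasigroup `G` (with left division `ldiv` and right
division `rdiv`, so `a\b = ldiv a b` and `a/b = rdiv a b`) together with maps
`t, p : G×G×G → N(G)` such that `(ab)c = t(a,b,c)·(a(bc))` and
`(ab)c = (a(bc))·p(a,b,c)`. -/
structure FanQuasigroup (G : Type*) where
  mul : G → G → G
  ldiv : G → G → G
  rdiv : G → G → G
  e : G
  mul_ldiv : ∀ a b, mul a (ldiv a b) = b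
  ldiv_mul : ∀ a b, ldiv a (mul a b) = b
  rdiv_mul : ∀ a b, mul (rdiv a b) b = a
  mul_rdiv : ∀ a b, rdiv (mul a b) b = a
  one_mul : ∀ a, mul e a = a
  mul_one : ∀ a, mul a e = a
  t : G → G → G → G
  p : G → G → G → G
  t_mem : ∀ a b c, t a b c ∈ nucleusSet mul
  p_mem : ∀ a b c, p a b c ∈ nucleusSet mul
  t_spec : ∀ a b c, mul (mul a b) c = mul (t a b c) (mul a (mul b c))
  p_spec : ∀ a b c, mul (mul a b) c = mul (mul a (mul b c)) (p a b c)

/-- The inverse of an element in the group `N(G)`, computed as `x\e`. -/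
def FanQuasigroup.inv {G : Type*} (Q : FanQuasigroup G) (x : G) : G := Q.ldiv x Q.e

/-- A subset `S` of a fan quasigroup is a subgroup if it contains the neutral
element, is closed under multiplication and inversion, and multiplication
restricted to it is associative (so that it is a group). -/
def FanQuasigroup.IsSubgrp {G : Type*} (Q : FanQuasigroup G) (S : Set G) : Prop :=
  Q.e ∈ S ∧ (∀ x ∈ S, ∀ y ∈ S, Q.mul x y ∈ S) ∧ (∀ x ∈ S, Q.ldiv x Q.e ∈ S) ∧
    (∀ x ∈ S, ∀ y ∈ S, ∀ z ∈ S, Q.mul (Q.mul x y) z = Q.mul x (Q.mul y z))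

/-- The fan `N₀(G)` of a topological fan quasigroup: the minimal closed subgroup
containing all the values `t(a,b,c)` and `p(a,b,c)`. -/
def FanQuasigroup.fan {G : Type*} [TopologicalSpace G] (Q : FanQuasigroup G) : Set G :=
  ⋂₀ {S : Set G | IsClosed S ∧ Q.IsSubgrp S ∧ ∀ a b c : G, Q.t a b c ∈ S ∧ Q.p a b c ∈ S}

/-- A subset `H` of a fan quasigroup is normal if `xH = Hx`, `(xy)H = x(yH)`,
`(xH)y = x(Hy)` and `H(xy) = (Hx)y` for all `x, y`. -/
def FanQuasigroup.IsNormalSub {G : Type*} (Q : FanQuasigroup G) (H : Set G) : Prop :=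
  ∀ x y : G,
    (fun h => Q.mul x h) '' H = (fun h => Q.mul h x) '' H ∧
    (fun h => Q.mul (Q.mul x y) h) '' H = (fun h => Q.mul x (Q.mul y h)) '' H ∧
    (fun h => Q.mul (Q.mul x h) y) '' H = (fun h => Q.mul x (Q.mul h y)) '' H ∧
    (fun h => Q.mul h (Q.mul x y)) '' H = (fun h => Q.mul (Q.mul h x) y) '' H

/-!
The nucleus `N(G)` is a subgroup, and it is closed because `G` is T1 and the nucleus is cut out
by equations between continuous maps; it contains every `t(a,b,c)` and `p(a,b,c)`, so
`N₀ ⊆ N(G)`. Three of the four normality identities then just say that the elements of `N₀` are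
nuclear. For `xN₀ = N₀x`, the `m ∈ N₀` with `(xm)/x ∈ N₀` form a closed subgroup; it contains
each `t(a,b,c)` by the pentagon expansion of `((xa)b)c`, and each `p(a,b,c)` because
`t(a,b,c)·a(bc) = a(bc)·p(a,b,c)`. Hence `xN₀ ⊆ N₀x` for every `x`, and the reverse inclusion
follows by applying this to both `x` and `x\e`.
-/

namespace FanQuasigroup

variable {G : Type*} (Q : FanQuasigroup G)

local infixl:70 " ** " => Q.mul

theorem mul_left_cancel {a b c : G} (h : a ** b = a ** c) : b = c := by
  simpa only [Q.ldiv_mul] using congrArg (Q.ldiv a) h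

theorem mul_right_cancel {a b c : G} (h : a ** c = b ** c) : a = b := by
  simpa only [Q.mul_rdiv] using congrArg (Q.rdiv · c) h

theorem ldiv_eq_e_iff {a b : G} : Q.ldiv a b = Q.e ↔ a = b := by
  constructor
  · intro h
    simpa only [h, Q.mul_one] using Q.mul_ldiv a b
  · rintro rfl
    exact Q.mul_left_cancel (by rw [Q.mul_ldiv, Q.mul_one])

theorem assoc_left {n : G} (hn : n ∈ nucleusSet Q.mul) (b c : G) :
    (n ** b) ** c = n ** (b ** c) := hn.1.1 b c

theorem assoc_mid {n : G} (hn : n ∈ nucleusSet Q.mul) (b c : G) :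
    (b ** n) ** c = b ** (n ** c) := hn.1.2 b c

theorem assoc_right {n : G} (hn : n ∈ nucleusSet Q.mul) (b c : G) :
    (b ** c) ** n = b ** (c ** n) := hn.2 b c

theorem inv_mul {n : G} (hn : n ∈ nucleusSet Q.mul) : Q.inv n ** n = Q.e :=
  Q.mul_left_cancel (by rw [← Q.assoc_left hn, inv, Q.mul_ldiv, Q.one_mul, Q.mul_one])

theorem inv_mul_cancel_left {n : G} (hn : n ∈ nucleusSet Q.mul) (y : G) :
    Q.inv n ** (n ** y) = y := by
  rw [← Q.assoc_mid hn, Q.inv_mul hn, Q.one_mul]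

theorem mul_inv_cancel_right {n : G} (hn : n ∈ nucleusSet Q.mul) (y : G) :
    (y ** n) ** Q.inv n = y := by
  rw [Q.assoc_mid hn, inv, Q.mul_ldiv, Q.mul_one]

theorem eq_inv_mul_mul_of_mul_eq_mul {A B u v : G} (hA : A ∈ nucleusSet Q.mul)
    (hB : B ∈ nucleusSet Q.mul) (h : A ** u = B ** v) : u = (Q.inv A ** B) ** v := by
  rw [Q.assoc_mid hB, ← h, Q.inv_mul_cancel_left hA]

theorem e_mem_nucleus : Q.e ∈ nucleusSet Q.mul :=
  ⟨⟨fun b c => by simp only [Q.one_mul], fun b c => by simp only [Q.mul_one, Q.one_mul]⟩,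
    fun b c => by simp only [Q.mul_one]⟩

theorem mul_mem_nucleus {a b : G} (ha : a ∈ nucleusSet Q.mul) (hb : b ∈ nucleusSet Q.mul) :
    a ** b ∈ nucleusSet Q.mul := by
  refine ⟨⟨fun x y => ?_, fun x y => ?_⟩, fun x y => ?_⟩
  · rw [Q.assoc_left ha, Q.assoc_left ha, Q.assoc_left hb, Q.assoc_left ha]
  · rw [← Q.assoc_mid ha, Q.assoc_mid hb, Q.assoc_mid ha, Q.assoc_mid hb]
  · rw [← Q.assoc_right hb, Q.assoc_right ha, Q.assoc_right hb, Q.assoc_right hb]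

theorem inv_mem_nucleus {n : G} (hn : n ∈ nucleusSet Q.mul) : Q.inv n ∈ nucleusSet Q.mul := by
  refine ⟨⟨fun b c => ?_, fun b c => ?_⟩, fun b c => ?_⟩
  · obtain ⟨b, rfl⟩ : ∃ b', n ** b' = b := ⟨_, Q.mul_ldiv n b⟩
    rw [Q.inv_mul_cancel_left hn, Q.assoc_left hn, Q.inv_mul_cancel_left hn]
  · obtain ⟨b, rfl⟩ : ∃ b', b' ** n = b := ⟨_, Q.rdiv_mul b n⟩
    obtain ⟨c, rfl⟩ : ∃ c', n ** c' = c := ⟨_, Q.mul_ldiv n c⟩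
    rw [Q.mul_inv_cancel_right hn, Q.inv_mul_cancel_left hn, Q.assoc_mid hn]
  · obtain ⟨c, rfl⟩ : ∃ c', c' ** n = c := ⟨_, Q.rdiv_mul c n⟩
    rw [Q.mul_inv_cancel_right hn, ← Q.assoc_right hn, Q.mul_inv_cancel_right hn]

theorem isSubgrp_nucleus : Q.IsSubgrp (nucleusSet Q.mul) :=
  ⟨Q.e_mem_nucleus, fun _ hx _ hy => Q.mul_mem_nucleus hx hy, fun _ hx => Q.inv_mem_nucleus hx,
    fun _ hx y _ z _ => Q.assoc_left hx y z⟩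

theorem isSubgrp_inter {S T : Set G} (hS : Q.IsSubgrp S) (he : Q.e ∈ T)
    (hmul : ∀ x ∈ S ∩ T, ∀ y ∈ S ∩ T, x ** y ∈ T) (hinv : ∀ x ∈ S ∩ T, Q.inv x ∈ T) :
    Q.IsSubgrp (S ∩ T) :=
  ⟨⟨hS.1, he⟩, fun x hx y hy => ⟨hS.2.1 x hx.1 y hy.1, hmul x hx y hy⟩,
    fun x hx => ⟨hS.2.2.1 x hx.1, hinv x hx⟩,
    fun x hx y hy z hz => hS.2.2.2 x hx.1 y hy.1 z hz.1⟩

theorem conj_mul {x m m' n n' : G} (hm' : m' ∈ nucleusSet Q.mul) (hn : n ∈ nucleusSet Q.mul)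
    (h : x ** m = n ** x) (h' : x ** m' = n' ** x) : x ** (m ** m') = (n ** n') ** x := by
  rw [← Q.assoc_right hm', h, Q.assoc_left hn, h', Q.assoc_left hn]

theorem conj_inv {x m n : G} (hm : m ∈ nucleusSet Q.mul) (hn : n ∈ nucleusSet Q.mul)
    (h : x ** m = n ** x) : x ** Q.inv m = Q.inv n ** x := by
  conv_rhs => rw [← Q.mul_inv_cancel_right hm x, h, Q.assoc_left hn, Q.inv_mul_cancel_left hn]

theorem image_mul_right_subset_image_mul_left {H : Set G} (hH : H ⊆ nucleusSet Q.mul)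
    (hH' : ∀ x, (fun h => x ** h) '' H ⊆ (fun h => h ** x) '' H) (x : G) :
    (fun h => h ** x) '' H ⊆ (fun h => x ** h) '' H := by
  rintro _ ⟨n, hn, rfl⟩
  have hx : x ** Q.inv x = Q.e := Q.mul_ldiv x Q.e
  obtain ⟨n', hn', h'⟩ : ∃ n' ∈ H, n' ** Q.inv x = Q.inv x ** n :=
    hH' (Q.inv x) ⟨n, hn, rfl⟩
  obtain ⟨n'', hn'', h''⟩ : ∃ n'' ∈ H, n'' ** x = x ** n' := hH' x ⟨n', hn', rfl⟩
  refine ⟨n', hn', h''.symm.trans (congrArg (· ** x) ?_)⟩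
  calc n'' = (n'' ** x) ** Q.inv x := by rw [Q.assoc_left (hH hn''), hx, Q.mul_one]
    _ = x ** (Q.inv x ** n) := by rw [h'', Q.assoc_mid (hH hn'), h']
    _ = n := by rw [← Q.assoc_right (hH hn), hx, Q.one_mul]

variable [TopologicalSpace G]

theorem isClosed_setOf_eq [T1Space G] {X : Type*} [TopologicalSpace X]
    (hcl : Continuous fun q : G × G => Q.ldiv q.1 q.2) {f g : X → G} (hf : Continuous f)
    (hg : Continuous g) : IsClosed {x | f x = g x} := by
  have h : {x | f x = g x} = (fun x => Q.ldiv (f x) (g x)) ⁻¹' {Q.e} := by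
    ext; exact Q.ldiv_eq_e_iff.symm
  exact h ▸ isClosed_singleton.preimage (hcl.comp (hf.prodMk hg))

theorem isClosed_nucleus [T1Space G] (hcm : Continuous fun q : G × G => Q.mul q.1 q.2)
    (hcl : Continuous fun q : G × G => Q.ldiv q.1 q.2) : IsClosed (nucleusSet Q.mul) := by
  have hmul {f g : G → G} (hf : Continuous f) (hg : Continuous g) :
      Continuous fun x => f x ** g x := hcm.comp (hf.prodMk hg)
  simp only [nucleusSet, leftNucleus, midNucleus, rightNucleus, Set.ofPred_forall]
  refine .inter (.inter ?_ ?_) ?_ <;>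
    refine isClosed_iInter fun b => isClosed_iInter fun c => Q.isClosed_setOf_eq hcl
      (hmul (hmul ?_ ?_) ?_) (hmul ?_ (hmul ?_ ?_)) <;>
    first | exact continuous_id | exact continuous_const

theorem fan_subset {S : Set G} (hS : IsClosed S) (hsub : Q.IsSubgrp S)
    (ht : ∀ a b c, Q.t a b c ∈ S) (hp : ∀ a b c, Q.p a b c ∈ S) : Q.fan ⊆ S :=
  Set.sInter_subset_of_mem ⟨hS, hsub, fun a b c => ⟨ht a b c, hp a b c⟩⟩

theorem isClosed_fan : IsClosed Q.fan :=
  isClosed_sInter fun _ hS => hS.1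

theorem t_mem_fan (a b c : G) : Q.t a b c ∈ Q.fan :=
  Set.mem_sInter.mpr fun _ hS => (hS.2.2 a b c).1

theorem p_mem_fan (a b c : G) : Q.p a b c ∈ Q.fan :=
  Set.mem_sInter.mpr fun _ hS => (hS.2.2 a b c).2

theorem e_mem_fan : Q.e ∈ Q.fan :=
  Set.mem_sInter.mpr fun _ hS => hS.2.1.1

theorem mul_mem_fan {x y : G} (hx : x ∈ Q.fan) (hy : y ∈ Q.fan) : x ** y ∈ Q.fan :=
  Set.mem_sInter.mpr fun S hS =>
    hS.2.1.2.1 x (Set.mem_sInter.mp hx S hS) y (Set.mem_sInter.mp hy S hS)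

theorem inv_mem_fan {x : G} (hx : x ∈ Q.fan) : Q.inv x ∈ Q.fan :=
  Set.mem_sInter.mpr fun S hS => hS.2.1.2.2.1 x (Set.mem_sInter.mp hx S hS)

theorem fan_subset_nucleus [T1Space G] (hcm : Continuous fun q : G × G => Q.mul q.1 q.2)
    (hcl : Continuous fun q : G × G => Q.ldiv q.1 q.2) : Q.fan ⊆ nucleusSet Q.mul :=
  Q.fan_subset (Q.isClosed_nucleus hcm hcl) Q.isSubgrp_nucleus Q.t_mem Q.p_mem

theorem isSubgrp_fan (hsub : Q.fan ⊆ nucleusSet Q.mul) : Q.IsSubgrp Q.fan :=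
  ⟨Q.e_mem_fan, fun _ hx _ hy => Q.mul_mem_fan hx hy, fun _ hx => Q.inv_mem_fan hx,
    fun _ hx y _ z _ => Q.assoc_left (hsub hx) y z⟩

def fanConjPreimage (x : G) : Set G := {m | Q.rdiv (x ** m) x ∈ Q.fan}

theorem mem_fanConjPreimage_iff {x m : G} :
    m ∈ Q.fanConjPreimage x ↔ ∃ n ∈ Q.fan, x ** m = n ** x := by
  refine ⟨fun h => ⟨_, h, (Q.rdiv_mul _ x).symm⟩, ?_⟩
  rintro ⟨n, hn, h⟩
  show Q.rdiv (x ** m) x ∈ Q.fan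
  rwa [h, Q.mul_rdiv]

theorem isClosed_fanConjPreimage (hcm : Continuous fun q : G × G => Q.mul q.1 q.2)
    (hcr : Continuous fun q : G × G => Q.rdiv q.1 q.2) (x : G) :
    IsClosed (Q.fanConjPreimage x) :=
  Q.isClosed_fan.preimage <|
    hcr.comp ((hcm.comp (continuous_const.prodMk continuous_id)).prodMk continuous_const)

theorem t_mem_fanConjPreimage (x a b c : G) : Q.t a b c ∈ Q.fanConjPreimage x := by
  set m := a ** (b ** c)
  set A := Q.t x a b ** Q.t x (a ** b) c
  set B := Q.t (x ** a) b c ** Q.t x a (b ** c)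
  have hA : A ∈ nucleusSet Q.mul := Q.mul_mem_nucleus (Q.t_mem x a b) (Q.t_mem x (a ** b) c)
  have hB : B ∈ nucleusSet Q.mul :=
    Q.mul_mem_nucleus (Q.t_mem (x ** a) b c) (Q.t_mem x a (b ** c))
  have hAf : A ∈ Q.fan := Q.mul_mem_fan (Q.t_mem_fan x a b) (Q.t_mem_fan x (a ** b) c)
  have hBf : B ∈ Q.fan := Q.mul_mem_fan (Q.t_mem_fan (x ** a) b c) (Q.t_mem_fan x a (b ** c))
  have pentagon : A ** ((x ** Q.t a b c) ** m) = B ** (x ** m) := calc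
    A ** ((x ** Q.t a b c) ** m)
      = Q.t x a b ** (Q.t x (a ** b) c ** (x ** ((a ** b) ** c))) := by
        rw [Q.assoc_left (Q.t_mem x a b), Q.t_spec a b c, Q.assoc_mid (Q.t_mem a b c)]
    _ = ((x ** a) ** b) ** c := by
        rw [← Q.t_spec, ← Q.assoc_left (Q.t_mem x a b), ← Q.t_spec]
    _ = B ** (x ** m) := by
        rw [Q.t_spec, Q.t_spec x a (b ** c), Q.assoc_left (Q.t_mem (x ** a) b c)]
  refine (Q.mem_fanConjPreimage_iff).mpr
    ⟨Q.inv A ** B, Q.mul_mem_fan (Q.inv_mem_fan hAf) hBf, Q.mul_right_cancel (c := m) ?_⟩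
  rw [Q.eq_inv_mul_mul_of_mul_eq_mul hA hB pentagon,
    Q.assoc_left (Q.mul_mem_nucleus (Q.inv_mem_nucleus hA) hB)]

theorem p_mem_fanConjPreimage (hsub : Q.fan ⊆ nucleusSet Q.mul) (x a b c : G) :
    Q.p a b c ∈ Q.fanConjPreimage x := by
  set m := a ** (b ** c)
  have htp : Q.t a b c ** m = m ** Q.p a b c := by rw [← Q.t_spec, Q.p_spec]
  obtain ⟨y, rfl⟩ : ∃ y, y ** m = x := ⟨_, Q.rdiv_mul x m⟩
  obtain ⟨T, hT, hyT⟩ := (Q.mem_fanConjPreimage_iff).mp (Q.t_mem_fanConjPreimage y a b c)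
  refine (Q.mem_fanConjPreimage_iff).mpr ⟨T, hT, ?_⟩
  rw [Q.assoc_right (Q.p_mem a b c), ← htp, ← Q.assoc_mid (Q.t_mem a b c), hyT,
    Q.assoc_left (hsub hT)]

theorem isSubgrp_fan_inter_fanConjPreimage (hsub : Q.fan ⊆ nucleusSet Q.mul) (x : G) :
    Q.IsSubgrp (Q.fan ∩ Q.fanConjPreimage x) := by
  refine Q.isSubgrp_inter (Q.isSubgrp_fan hsub) ?_ ?_ ?_
  · exact (Q.mem_fanConjPreimage_iff).mpr ⟨Q.e, Q.e_mem_fan, by rw [Q.mul_one, Q.one_mul]⟩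
  · rintro m ⟨-, hm⟩ m' ⟨hm'f, hm'⟩
    obtain ⟨n, hn, h⟩ := (Q.mem_fanConjPreimage_iff).mp hm
    obtain ⟨n', hn', h'⟩ := (Q.mem_fanConjPreimage_iff).mp hm'
    exact (Q.mem_fanConjPreimage_iff).mpr
      ⟨n ** n', Q.mul_mem_fan hn hn', Q.conj_mul (hsub hm'f) (hsub hn) h h'⟩
  · rintro m ⟨hmf, hm⟩
    obtain ⟨n, hn, h⟩ := (Q.mem_fanConjPreimage_iff).mp hm
    exact (Q.mem_fanConjPreimage_iff).mpr
      ⟨Q.inv n, Q.inv_mem_fan hn, Q.conj_inv (hsub hmf) (hsub hn) h⟩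

theorem image_mul_left_fan_subset (hsub : Q.fan ⊆ nucleusSet Q.mul)
    (hcm : Continuous fun q : G × G => Q.mul q.1 q.2)
    (hcr : Continuous fun q : G × G => Q.rdiv q.1 q.2) (x : G) :
    (fun h => x ** h) '' Q.fan ⊆ (fun h => h ** x) '' Q.fan := by
  have hfan : Q.fan ⊆ Q.fan ∩ Q.fanConjPreimage x :=
    Q.fan_subset (Q.isClosed_fan.inter (Q.isClosed_fanConjPreimage hcm hcr x))
      (Q.isSubgrp_fan_inter_fanConjPreimage hsub x)
      (fun a b c => ⟨Q.t_mem_fan a b c, Q.t_mem_fanConjPreimage x a b c⟩)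
      (fun a b c => ⟨Q.p_mem_fan a b c, Q.p_mem_fanConjPreimage hsub x a b c⟩)
  rintro _ ⟨m, hm, rfl⟩
  obtain ⟨n, hn, h⟩ := (Q.mem_fanConjPreimage_iff).mp (hfan hm).2
  exact ⟨n, hn, h.symm⟩

end FanQuasigroup

/-- in a T1 topological fan quasigroup the fan `N₀ = N₀(G)` is a
closed normal subgroup: it is closed, a subgroup, and satisfies `xN₀ = N₀x`,
`(xy)N₀ = x(yN₀)`, `(xN₀)y = x(N₀y)` and `N₀(xy) = (N₀x)y` for all `x, y ∈ G`. -/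
theorem stmt_5 {G : Type*} [TopologicalSpace G] [T1Space G]
    (Q : FanQuasigroup G)
    (hcm : Continuous fun q : G × G => Q.mul q.1 q.2)
    (hcl : Continuous fun q : G × G => Q.ldiv q.1 q.2)
    (hcr : Continuous fun q : G × G => Q.rdiv q.1 q.2) :
    IsClosed Q.fan ∧ Q.IsSubgrp Q.fan ∧ Q.IsNormalSub Q.fan := by
  have hsub : Q.fan ⊆ nucleusSet Q.mul := Q.fan_subset_nucleus hcm hcl
  have hleft := Q.image_mul_left_fan_subset hsub hcm hcr
  refine ⟨Q.isClosed_fan, Q.isSubgrp_fan hsub, fun x y => ⟨?_, ?_, ?_, ?_⟩⟩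
  · exact (hleft x).antisymm (Q.image_mul_right_subset_image_mul_left hsub hleft x)
  · exact Set.image_congr fun h hh => Q.assoc_right (hsub hh) x y
  · exact Set.image_congr fun h hh => Q.assoc_mid (hsub hh) x y
  · exact Set.image_congr fun h hh => (Q.assoc_left (hsub hh) x y).symm
end

section
/- Let G be a topological fan quasigroup whose topology is T1, with fan N₀ = N₀(G) and nucleus N(G). Let N₁ be a closed subgroup of G with N₀ ⊆ N₁ ⊆ N(G) satisfying xN₁ = N₁x for all x ∈ G. Then the coset multiplication (aN₁)(bN₁) = (ab)N₁ is well defined on the set G/N₁ of cosets {aN₁ : a ∈ G}, and G/N₁, with this multiplication and the quotient topology, is a topological group which is T1 and completely regular (T3.5). -/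
/-- The setoid on `G` identifying elements with equal left cosets `aN₁`. -/
def cosetSetoid {G : Type*} (Q : FanQuasigroup G) (N₁ : Set G) : Setoid G :=
  ⟨fun a b => (fun n => Q.mul a n) '' N₁ = (fun n => Q.mul b n) '' N₁,
    ⟨fun _ => rfl, Eq.symm, Eq.trans⟩⟩


section Alg
variable {G : Type*} (Q : FanQuasigroup G) {N₁ : Set G}

lemma FQ.left_nuc (hnuc : N₁ ⊆ nucleusSet Q.mul) {n : G} (hn : n ∈ N₁) (b c : G) :
    Q.mul (Q.mul n b) c = Q.mul n (Q.mul b c) := (hnuc hn).1.1 b c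

lemma FQ.mid_nuc (hnuc : N₁ ⊆ nucleusSet Q.mul) {n : G} (hn : n ∈ N₁) (b c : G) :
    Q.mul (Q.mul b n) c = Q.mul b (Q.mul n c) := (hnuc hn).1.2 b c

lemma FQ.right_nuc (hnuc : N₁ ⊆ nucleusSet Q.mul) {n : G} (hn : n ∈ N₁) (b c : G) :
    Q.mul (Q.mul b c) n = Q.mul b (Q.mul c n) := (hnuc hn).2 b c

lemma FQ.rel_of_ldiv (hgrp : Q.IsSubgrp N₁) (hnuc : N₁ ⊆ nucleusSet Q.mul)
    {a b : G} (h : Q.ldiv b a ∈ N₁) : (cosetSetoid Q N₁).r a b := by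
  obtain ⟨he, hmul, hinv, hassoc⟩ := hgrp
  set n := Q.ldiv b a with hn
  have hab : a = Q.mul b n := (Q.mul_ldiv b a).symm
  show (fun m => Q.mul a m) '' N₁ = (fun m => Q.mul b m) '' N₁
  ext x
  constructor
  · rintro ⟨m, hm, rfl⟩
    exact ⟨Q.mul n m, hmul n h m hm, by simp only [hab, FQ.mid_nuc Q hnuc h]⟩
  · rintro ⟨m, hm, rfl⟩
    refine ⟨Q.mul (Q.ldiv n Q.e) m, hmul _ (hinv n h) m hm, ?_⟩
    have h1 : Q.mul n (Q.mul (Q.ldiv n Q.e) m) = m := by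
      rw [hassoc n h _ (hinv n h) m hm |>.symm, Q.mul_ldiv n Q.e, Q.one_mul]
    simp only [hab]
    rw [FQ.mid_nuc Q hnuc h, h1]

lemma FQ.ldiv_of_rel (hgrp : Q.IsSubgrp N₁)
    {a b : G} (h : (cosetSetoid Q N₁).r a b) : Q.ldiv b a ∈ N₁ := by
  have ha : a ∈ (fun m => Q.mul a m) '' N₁ := ⟨Q.e, hgrp.1, Q.mul_one a⟩
  rw [show ((fun m => Q.mul a m) '' N₁ = (fun m => Q.mul b m) '' N₁) from h] at ha
  obtain ⟨n, hn, hx⟩ := ha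
  have : Q.ldiv b a = n := by rw [← hx, Q.ldiv_mul]
  rwa [this]

lemma FQ.mul_compat (hgrp : Q.IsSubgrp N₁) (hnuc : N₁ ⊆ nucleusSet Q.mul)
    (hcomm : ∀ x : G, (fun n => Q.mul x n) '' N₁ = (fun n => Q.mul n x) '' N₁)
    {a b a' b' : G} (h : (cosetSetoid Q N₁).r a b) (h' : (cosetSetoid Q N₁).r a' b') :
    (cosetSetoid Q N₁).r (Q.mul a a') (Q.mul b b') := by
  obtain ⟨he, hmul, hinv, hassoc⟩ := hgrp
  have hn := FQ.ldiv_of_rel Q ⟨he, hmul, hinv, hassoc⟩ h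
  have hn' := FQ.ldiv_of_rel Q ⟨he, hmul, hinv, hassoc⟩ h'
  set n := Q.ldiv b a with hdefn
  set n' := Q.ldiv b' a' with hdefn'
  have hab : a = Q.mul b n := (Q.mul_ldiv b a).symm
  have hab' : a' = Q.mul b' n' := (Q.mul_ldiv b' a').symm
  -- mul n b' ∈ N₁ b' = b' N₁
  have hmem : Q.mul n b' ∈ (fun m => Q.mul b' m) '' N₁ := by
    rw [hcomm b']; exact ⟨n, hn, rfl⟩
  obtain ⟨μ, hμ, hμeq⟩ := hmem
  have hk : Q.mul μ n' ∈ N₁ := hmul μ hμ n' hn'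
  have key : Q.mul a a' = Q.mul (Q.mul b b') (Q.mul μ n') := by
    rw [hab, hab', FQ.mid_nuc Q hnuc hn, ← FQ.left_nuc Q hnuc hn, ← hμeq,
      FQ.mid_nuc Q hnuc hμ, ← FQ.right_nuc Q hnuc hk]
  refine FQ.rel_of_ldiv Q ⟨he, hmul, hinv, hassoc⟩ hnuc ?_
  rw [key, Q.ldiv_mul]; exact hk

lemma FQ.p_mem_fan {G : Type*} [TopologicalSpace G] (Q : FanQuasigroup G) (a b c : G) :
    Q.p a b c ∈ Q.fan := fun _ hS => (hS.2.2 a b c).2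

end Alg
section CRS

/-- Type copy used to install an auxiliary uniform structure. -/
def GrpCopy (H : Type*) := H

open Filter Set Topology Uniformity in
open scoped SetRel in
theorem crs_of_topGroup {H : Type*} [Group H] [TopologicalSpace H] [IsTopologicalGroup H] :
    CompletelyRegularSpace H := by
  constructor
  intro x K hK hx
  set U : Set H := (fun z => x * z) ⁻¹' Kᶜ with hUdef
  have hUopen : IsOpen U := hK.isOpen_compl.preimage (continuous_const.mul continuous_id)
  have hU1 : (1 : H) ∈ U := by simp [hUdef, hx]
  have hUnhds : U ∈ 𝓝 (1 : H) := hUopen.mem_nhds hU1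
  -- a step function producing smaller symmetric neighborhoods
  have step : ∀ W : Set H, ∃ S : Set H, W ∈ 𝓝 (1 : H) →
      S ∈ 𝓝 (1 : H) ∧ (∀ v ∈ S, v⁻¹ ∈ S) ∧ ∀ v ∈ S, ∀ w ∈ S, v * w ∈ W := by
    intro W
    by_cases hW : W ∈ 𝓝 (1 : H)
    · obtain ⟨V', hV', hsplit⟩ := exists_nhds_one_split hW
      refine ⟨V' ∩ V'⁻¹, fun _ => ⟨inter_mem hV' (inv_mem_nhds_one H hV'), ?_, ?_⟩⟩
      · rintro v ⟨hv1, hv2⟩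
        exact ⟨hv2, by simpa using hv1⟩
      · rintro v ⟨hv1, _⟩ w ⟨hw1, _⟩
        exact hsplit v hv1 w hw1
    · exact ⟨∅, fun h => absurd h hW⟩
  choose g hg using step
  set V : ℕ → Set H := fun n => Nat.rec (U ∩ U⁻¹) (fun _ W => g W) n with hVdef
  have hV0 : V 0 = U ∩ U⁻¹ := rfl
  have hVsucc : ∀ n, V (n + 1) = g (V n) := fun n => rfl
  have hVnhds : ∀ n, V n ∈ 𝓝 (1 : H) := by
    intro n
    induction n with
    | zero => exact inter_mem hUnhds (inv_mem_nhds_one H hUnhds)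
    | succ n ih => rw [hVsucc]; exact (hg (V n) ih).1
  have hVsymm : ∀ n, ∀ v ∈ V n, v⁻¹ ∈ V n := by
    intro n
    induction n with
    | zero =>
      rintro v ⟨hv1, hv2⟩
      exact ⟨hv2, by simpa using hv1⟩
    | succ n ih =>
      rw [hVsucc]
      exact (hg (V n) (hVnhds n)).2.1
  have hVmul : ∀ n, ∀ v ∈ V (n + 1), ∀ w ∈ V (n + 1), v * w ∈ V n := by
    intro n
    rw [hVsucc]
    exact (hg (V n) (hVnhds n)).2.2
  have hVanti : ∀ n, V (n + 1) ⊆ V n := by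
    intro n v hv
    have := hVmul n v hv 1 (mem_of_mem_nhds (hVnhds (n + 1)))
    simpa using this
  -- entourages
  set E : ℕ → Set (H × H) := fun n => {p | p.1⁻¹ * p.2 ∈ V n} with hEdef
  have hEanti : ∀ n, E (n + 1) ⊆ E n := fun n p hp => hVanti n hp
  have hEdir : Directed (· ≥ ·) E := by
    intro a b
    refine ⟨max a b, ?_, ?_⟩ <;>
    · intro p hp
      simp only [hEdef, mem_setOf_eq] at hp ⊢
      have mono : ∀ m k, m ≤ k → V k ⊆ V m := by
        intro m k hmk
        induction hmk with
        | refl => exact fun _ h => h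
        | step _ ih => exact fun y hy => ih (hVanti _ hy)
      first
        | exact mono a (max a b) (le_max_left a b) hp
        | exact mono b (max a b) (le_max_right a b) hp
  set F : Filter (H × H) := ⨅ n, 𝓟 (E n) with hFdef
  have hFbasis : F.HasBasis (fun _ : ℕ => True) E := Filter.hasBasis_iInf_principal hEdir
  have hEF : ∀ n, E n ∈ F := fun n => mem_iInf_of_mem n (mem_principal_self _)
  -- core axioms, proved over H
  have hrefl : 𝓟 SetRel.id ≤ F := by
    refine le_iInf fun n => principal_mono.2 ?_
    rintro ⟨a, b⟩ hab
    have hab' : a = b := hab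
    subst hab'
    show a⁻¹ * a ∈ V n
    rw [inv_mul_cancel]
    exact mem_of_mem_nhds (hVnhds n)
  have hsymm : Tendsto Prod.swap F F := by
    rw [hFdef, tendsto_iInf]
    intro n
    rw [tendsto_principal]
    filter_upwards [hEF n] with p hp
    show p.2⁻¹ * p.1 ∈ V n
    have h2 : (p.1⁻¹ * p.2)⁻¹ ∈ V n := hVsymm n _ hp
    simpa using h2
  have hcomp : F.lift' (fun s => s ○ s) ≤ F := by
    refine le_iInf fun n => le_principal_iff.2 ?_
    refine mem_of_superset (mem_lift' (hEF (n + 1))) ?_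
    rintro ⟨a, c⟩ ⟨b, hab, hbc⟩
    show a⁻¹ * c ∈ V n
    have h3 : (a⁻¹ * b) * (b⁻¹ * c) ∈ V n := hVmul n _ hab _ hbc
    simpa [mul_assoc] using h3
  have hcgF : F.IsCountablyGenerated := by
    rw [hFdef]; exact Filter.iInf.isCountablyGenerated _
  obtain ⟨mS, hmS⟩ := @UniformSpace.metrizable_uniformity (GrpCopy H)
    (UniformSpace.ofCore { uniformity := F, refl := hrefl, symm := hsymm, comp := hcomp }) hcgF
  letI : PseudoMetricSpace (GrpCopy H) := mS
  have hunif : 𝓤 (GrpCopy H) = F := by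
    show @uniformity (GrpCopy H) mS.toUniformSpace = F
    rw [hmS]
    rfl
  let ι : H → GrpCopy H := fun a => a
  -- find ε such that dist-ball is inside E 0
  have hE0 : E 0 ∈ 𝓤 (GrpCopy H) := by rw [hunif]; exact hEF 0
  replace hE0 := Metric.mem_uniformity_dist.1 hE0
  obtain ⟨ε, hε, hball⟩ := hE0
  -- continuity of ι
  have hι : Continuous ι := by
    rw [continuous_iff_continuousAt]
    intro a
    rw [ContinuousAt, Metric.tendsto_nhds]
    intro δ hδ
    have hmem : {p : GrpCopy H × GrpCopy H | dist p.1 p.2 < δ} ∈ 𝓤 (GrpCopy H) :=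
      Metric.dist_mem_uniformity hδ
    rw [hunif] at hmem
    obtain ⟨n, -, hEn⟩ := hFbasis.mem_iff.1 hmem
    have hset : (fun y => a⁻¹ * y) ⁻¹' V n ∈ 𝓝 a := by
      refine ContinuousAt.preimage_mem_nhds ?_ ?_
      · exact (continuous_const.mul continuous_id).continuousAt
      · simpa using hVnhds n
    filter_upwards [hset] with y hy
    have : (ι a, ι y) ∈ E n := hy
    have hlt : dist (ι a) (ι y) < δ := hEn this
    simpa [dist_comm] using hlt
  -- the distance function
  set φ : H → ℝ := fun y => dist (ι 1) (ι (x⁻¹ * y)) with hφdef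
  have hφcont : Continuous φ := by
    have h1 : Continuous fun y : H => ι (x⁻¹ * y) :=
      hι.comp (continuous_const.mul continuous_id)
    exact (continuous_const.dist continuous_id).comp h1
  have hφx : φ x = 0 := by simp [hφdef]
  have hφK : ∀ y ∈ K, ε ≤ φ y := by
    intro y hy
    by_contra hlt
    push_neg at hlt
    have : (ι 1, ι (x⁻¹ * y)) ∈ E 0 := hball hlt
    have hV : x⁻¹ * y ∈ V 0 := by
      have h' : (1 : H)⁻¹ * (x⁻¹ * y) ∈ V 0 := this
      simpa using h'
    have hmem : x⁻¹ * y ∈ U := (hV0 ▸ hV).1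
    have : x * (x⁻¹ * y) ∈ Kᶜ := hmem
    simp only [mul_inv_cancel_left] at this
    exact this hy
  -- build the function to the unit interval
  refine ⟨fun y => Set.projIcc 0 1 zero_le_one (φ y / ε), ?_, ?_, ?_⟩
  · exact continuous_projIcc.comp (hφcont.div_const ε)
  · show Set.projIcc 0 1 zero_le_one (φ x / ε) = 0
    rw [hφx, zero_div]
    exact Set.projIcc_left _
  · intro y hy
    have h1 : (1 : ℝ) ≤ φ y / ε := (one_le_div hε).2 (hφK y hy)
    show Set.projIcc 0 1 zero_le_one (φ y / ε) = 1
    rw [Set.projIcc_of_right_le _ h1]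
    rfl

end CRS

open Topology

/-- for a T1 topological fan quasigroup `G` and a closed subgroup `N₁`
with `N₀(G) ⊆ N₁ ⊆ N(G)` and `xN₁ = N₁x` for all `x`, the coset multiplication
`(aN₁)(bN₁) = (ab)N₁` is well defined on `G/N₁` and makes it, with the quotient
topology, a topological group which is T1 and completely regular. -/
theorem stmt_6 {G : Type*} [TopologicalSpace G] [T1Space G]
    (Q : FanQuasigroup G)
    (hcm : Continuous fun q : G × G => Q.mul q.1 q.2)
    (hcl : Continuous fun q : G × G => Q.ldiv q.1 q.2)
    (hcr : Continuous fun q : G × G => Q.rdiv q.1 q.2)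
    (N₁ : Set G) (hN₁closed : IsClosed N₁) (hN₁grp : Q.IsSubgrp N₁)
    (hfan : Q.fan ⊆ N₁) (hnuc : N₁ ⊆ nucleusSet Q.mul)
    (hcomm : ∀ x : G, (fun n => Q.mul x n) '' N₁ = (fun n => Q.mul n x) '' N₁) :
    ∃ m : Quotient (cosetSetoid Q N₁) → Quotient (cosetSetoid Q N₁) →
        Quotient (cosetSetoid Q N₁),
      (∀ a b : G, m (Quotient.mk (cosetSetoid Q N₁) a) (Quotient.mk (cosetSetoid Q N₁) b)
          = Quotient.mk (cosetSetoid Q N₁) (Q.mul a b)) ∧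
      (∀ x y z, m (m x y) z = m x (m y z)) ∧
      (∀ x, m (Quotient.mk (cosetSetoid Q N₁) Q.e) x = x ∧
            m x (Quotient.mk (cosetSetoid Q N₁) Q.e) = x) ∧
      (∃ inv : Quotient (cosetSetoid Q N₁) → Quotient (cosetSetoid Q N₁),
        (∀ x, m x (inv x) = Quotient.mk (cosetSetoid Q N₁) Q.e ∧
              m (inv x) x = Quotient.mk (cosetSetoid Q N₁) Q.e) ∧
        Continuous inv) ∧
      Continuous (fun q : Quotient (cosetSetoid Q N₁) × Quotient (cosetSetoid Q N₁) =>
        m q.1 q.2) ∧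
      T1Space (Quotient (cosetSetoid Q N₁)) ∧
      CompletelyRegularSpace (Quotient (cosetSetoid Q N₁)) := by
  classical
  set s : Setoid G := cosetSetoid Q N₁ with hsdef
  let mk : G → Quotient s := Quotient.mk s
  -- the multiplication
  let m : Quotient s → Quotient s → Quotient s :=
    Quotient.map₂ Q.mul (fun a b hab a' b' hab' =>
      FQ.mul_compat Q hN₁grp hnuc hcomm hab hab')
  have m_mk : ∀ a b : G, m (mk a) (mk b) = mk (Q.mul a b) := fun a b => rfl
  -- associativity
  have massoc : ∀ x y z, m (m x y) z = m x (m y z) := by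
    intro x y z
    refine Quotient.inductionOn₃ x y z fun a b c => ?_
    show mk (Q.mul (Q.mul a b) c) = mk (Q.mul a (Q.mul b c))
    refine Quotient.sound (FQ.rel_of_ldiv Q hN₁grp hnuc ?_)
    rw [Q.p_spec, Q.ldiv_mul]
    exact hfan (FQ.p_mem_fan Q a b c)
  -- identity
  have honeL : ∀ x, m (mk Q.e) x = x := by
    intro x
    refine Quotient.inductionOn x fun a => ?_
    show mk (Q.mul Q.e a) = mk a
    rw [Q.one_mul]
  have honeR : ∀ x, m x (mk Q.e) = x := by
    intro x
    refine Quotient.inductionOn x fun a => ?_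
    show mk (Q.mul a Q.e) = mk a
    rw [Q.mul_one]
  -- inverses
  have hrinv : ∀ a : G, m (mk a) (mk (Q.ldiv a Q.e)) = mk Q.e := by
    intro a
    show mk (Q.mul a (Q.ldiv a Q.e)) = mk Q.e
    rw [Q.mul_ldiv]
  have hlinv : ∀ a : G, m (mk (Q.ldiv a Q.e)) (mk a) = mk Q.e := by
    intro a
    set y := Q.ldiv a Q.e with hy
    calc m (mk y) (mk a)
        = m (m (mk y) (mk a)) (mk Q.e) := (honeR _).symm
      _ = m (m (mk y) (mk a)) (m (mk y) (mk (Q.ldiv y Q.e))) := by rw [hrinv y]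
      _ = m (m (m (mk y) (mk a)) (mk y)) (mk (Q.ldiv y Q.e)) := (massoc _ _ _).symm
      _ = m (m (mk y) (m (mk a) (mk y))) (mk (Q.ldiv y Q.e)) := by rw [massoc (mk y) (mk a) (mk y)]
      _ = m (m (mk y) (mk Q.e)) (mk (Q.ldiv y Q.e)) := by rw [hrinv a]
      _ = m (mk y) (mk (Q.ldiv y Q.e)) := by rw [honeR (mk y)]
      _ = mk Q.e := hrinv y
  have hinvcompat : ∀ a b : G, s.r a b → s.r (Q.ldiv a Q.e) (Q.ldiv b Q.e) := by
    intro a b hab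
    refine Quotient.exact (s := s) ?_
    have hmk : mk a = mk b := Quotient.sound hab
    calc mk (Q.ldiv a Q.e)
        = m (mk (Q.ldiv a Q.e)) (mk Q.e) := (honeR _).symm
      _ = m (mk (Q.ldiv a Q.e)) (m (mk b) (mk (Q.ldiv b Q.e))) := by rw [hrinv b]
      _ = m (mk (Q.ldiv a Q.e)) (m (mk a) (mk (Q.ldiv b Q.e))) := by rw [hmk]
      _ = m (m (mk (Q.ldiv a Q.e)) (mk a)) (mk (Q.ldiv b Q.e)) := (massoc _ _ _).symm
      _ = m (mk Q.e) (mk (Q.ldiv b Q.e)) := by rw [hlinv a]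
      _ = mk (Q.ldiv b Q.e) := honeL _
  let invQ : Quotient s → Quotient s := Quotient.map (fun x => Q.ldiv x Q.e) hinvcompat
  have invQ_mk : ∀ a : G, invQ (mk a) = mk (Q.ldiv a Q.e) := fun a => rfl
  have hinv_spec : ∀ x, m x (invQ x) = mk Q.e ∧ m (invQ x) x = mk Q.e := by
    intro x
    refine Quotient.inductionOn x fun a => ?_
    exact ⟨hrinv a, hlinv a⟩
  -- topology facts
  have hmkc : Continuous mk := continuous_quotient_mk' (s := s)
  have hmkq : IsQuotientMap mk := isQuotientMap_quotient_mk' (s := s)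
  have hinvc : Continuous invQ := by
    rw [hmkq.continuous_iff]
    have : invQ ∘ mk = mk ∘ fun x => Q.ldiv x Q.e := rfl
    rw [this]
    refine hmkc.comp ?_
    exact hcl.comp (continuous_id.prodMk continuous_const)
  have hmkopen : IsOpenMap mk := by
    intro U hU
    rw [← hmkq.isOpen_preimage]
    have hpre : mk ⁻¹' (mk '' U) = ⋃ n ∈ N₁, (fun y => Q.rdiv y n) ⁻¹' U := by
      ext z
      simp only [Set.mem_preimage, Set.mem_image, Set.mem_iUnion]
      constructor
      · rintro ⟨u, hu, hmkz⟩
        have hrel : s.r z u := Quotient.exact hmkz.symm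
        have hn : Q.ldiv u z ∈ N₁ := FQ.ldiv_of_rel Q hN₁grp hrel
        refine ⟨Q.ldiv u z, hn, ?_⟩
        show Q.rdiv z (Q.ldiv u z) ∈ U
        have hzu := Q.mul_rdiv u (Q.ldiv u z)
        rw [Q.mul_ldiv] at hzu
        rw [hzu]
        exact hu
      · rintro ⟨n, hn, hu⟩
        refine ⟨Q.rdiv z n, hu, ?_⟩
        refine (Quotient.sound (FQ.rel_of_ldiv Q hN₁grp hnuc ?_)).symm
        have h2 := Q.ldiv_mul (Q.rdiv z n) n
        rw [Q.rdiv_mul] at h2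
        rw [h2]
        exact hn
    rw [hpre]
    refine isOpen_biUnion fun n _ => ?_
    exact hU.preimage (hcr.comp (continuous_id.prodMk continuous_const))
  have hmmq : IsQuotientMap fun p : G × G => (mk p.1, mk p.2) := by
    refine IsOpenMap.isQuotientMap ?_ ?_ ?_
    · exact hmkopen.prodMap hmkopen
    · exact (hmkc.comp continuous_fst).prodMk (hmkc.comp continuous_snd)
    · rintro ⟨x, y⟩
      obtain ⟨a, ha⟩ := Quotient.exists_rep x
      obtain ⟨b, hb⟩ := Quotient.exists_rep y
      exact ⟨(a, b), by simp only [Prod.mk.injEq]; exact ⟨ha, hb⟩⟩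
  have hmc : Continuous fun q : Quotient s × Quotient s => m q.1 q.2 := by
    rw [hmmq.continuous_iff]
    have : (fun q : Quotient s × Quotient s => m q.1 q.2) ∘ (fun p : G × G => (mk p.1, mk p.2))
        = mk ∘ fun p : G × G => Q.mul p.1 p.2 := rfl
    rw [this]
    exact hmkc.comp hcm
  -- T1
  have hT1 : T1Space (Quotient s) := by
    constructor
    intro q
    refine Quotient.inductionOn q fun a => ?_
    rw [← hmkq.isClosed_preimage]
    have hpre : mk ⁻¹' {mk a} = (fun x => Q.ldiv a x) ⁻¹' N₁ := by
      ext z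
      simp only [Set.mem_preimage, Set.mem_singleton_iff]
      constructor
      · intro h
        exact FQ.ldiv_of_rel Q hN₁grp (Quotient.exact h)
      · intro h
        exact Quotient.sound (FQ.rel_of_ldiv Q hN₁grp hnuc h)
    rw [hpre]
    exact hN₁closed.preimage (hcl.comp (continuous_const.prodMk continuous_id))
  -- group structure and complete regularity
  have hCR : CompletelyRegularSpace (Quotient s) := by
    letI : Group (Quotient s) :=
      { mul := m
        mul_assoc := massoc
        one := mk Q.e
        one_mul := honeL
        mul_one := honeR
        inv := invQ
        div := fun x y => m x (invQ y)
        div_eq_mul_inv := fun x y => rfl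
        inv_mul_cancel := fun x => (hinv_spec x).2 }
    haveI : IsTopologicalGroup (Quotient s) :=
      { continuous_mul := hmc
        continuous_inv := hinvc }
    exact crs_of_topGroup
  exact ⟨m, m_mk, massoc, fun x => ⟨honeL x, honeR x⟩, ⟨invQ, hinv_spec, hinvc⟩, hmc, hT1, hCR⟩
end

section
/- Let G be a fan quasigroup with neutral element e and maps t, p. Then for all a, b ∈ G: (i) (a\e)·b = t(e/a, a, a\e)·[t(e/a, a, a\b)]⁻¹·(a\b), where the inverse is taken in the group N(G); and (ii) a\b = ((a\e)·b)·p(a, a\e, b). -/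
/-- in a fan quasigroup, for all `a, b`:
(i) `(a\e)·b = t(e/a, a, a\e)·[t(e/a, a, a\b)]⁻¹·(a\b)` (inverse in the group `N(G)`,
i.e. `x⁻¹ = x\e`), and (ii) `a\b = ((a\e)·b)·p(a, a\e, b)`. -/
theorem stmt_14 {G : Type*} (Q : FanQuasigroup G) (a b : G) :
    Q.mul (Q.ldiv a Q.e) b =
      Q.mul (Q.mul (Q.t (Q.rdiv Q.e a) a (Q.ldiv a Q.e))
        (Q.inv (Q.t (Q.rdiv Q.e a) a (Q.ldiv a b)))) (Q.ldiv a b) ∧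
    Q.ldiv a b = Q.mul (Q.mul (Q.ldiv a Q.e) b) (Q.p a (Q.ldiv a Q.e) b) := by
  set t1 := Q.t (Q.rdiv Q.e a) a (Q.ldiv a Q.e) with ht1
  set t2 := Q.t (Q.rdiv Q.e a) a (Q.ldiv a b) with ht2
  obtain ⟨⟨hl1, -⟩, -⟩ := Q.t_mem (Q.rdiv Q.e a) a (Q.ldiv a Q.e)
  obtain ⟨⟨hl2, -⟩, -⟩ := Q.t_mem (Q.rdiv Q.e a) a (Q.ldiv a b)
  obtain ⟨⟨-, -⟩, hr⟩ := Q.p_mem a (Q.ldiv a Q.e) b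
  constructor
  · have h1 : Q.ldiv a Q.e = Q.mul t1 (Q.rdiv Q.e a) := by
      have h := Q.t_spec (Q.rdiv Q.e a) a (Q.ldiv a Q.e)
      rwa [Q.rdiv_mul, Q.one_mul, Q.mul_ldiv, Q.mul_one, ← ht1] at h
    have h2 : Q.ldiv a b = Q.mul t2 (Q.mul (Q.rdiv Q.e a) b) := by
      have h := Q.t_spec (Q.rdiv Q.e a) a (Q.ldiv a b)
      rwa [Q.rdiv_mul, Q.one_mul, Q.mul_ldiv, ← ht2] at h
    have hinv : ∀ y, Q.mul t2 (Q.mul (Q.inv t2) y) = y := by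
      intro y
      rw [← hl2 (Q.inv t2) y]
      show Q.mul (Q.mul t2 (Q.ldiv t2 Q.e)) y = y
      rw [Q.mul_ldiv, Q.one_mul]
    have h3 : Q.mul (Q.rdiv Q.e a) b = Q.mul (Q.inv t2) (Q.ldiv a b) := by
      have := congrArg (Q.ldiv t2) (h2.symm.trans (hinv (Q.ldiv a b)).symm)
      rwa [Q.ldiv_mul, Q.ldiv_mul] at this
    rw [h1, hl1, h3, hl1]
  · have h := Q.p_spec a (Q.ldiv a Q.e) b
    rw [Q.mul_ldiv, Q.one_mul, hr] at h
    conv_lhs => rw [h, Q.ldiv_mul]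
end

section
/- Let G be a fan quasigroup with neutral element e and maps t, p. Then for all a, b ∈ G: (i) (ab)\e = ((b\e)·(a\e))·[t(a, b, b\e)]⁻¹·t(ab, b\e, a\e), and (ii) e/(ab) = [p(e/b, e/a, ab)]⁻¹·p(e/a, a, b)·((e/b)·(e/a)), where inverses are taken in the group N(G). -/
namespace FanQuasigroup

variable {G : Type*} (Q : FanQuasigroup G)

lemma lcancel {n x y : G} (h : Q.mul n x = Q.mul n y) : x = y := by
  have := congrArg (Q.ldiv n) h
  rwa [Q.ldiv_mul, Q.ldiv_mul] at this

lemma rcancel {n x y : G} (h : Q.mul x n = Q.mul y n) : x = y := by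
  have := congrArg (fun z => Q.rdiv z n) h
  simpa [Q.mul_rdiv] using this

lemma inv_mul_self {n : G}
    (hn : ∀ x y, Q.mul (Q.mul n x) y = Q.mul n (Q.mul x y)) :
    Q.mul (Q.ldiv n Q.e) n = Q.e := by
  apply Q.lcancel (n := n)
  rw [← hn, Q.mul_ldiv, Q.one_mul, Q.mul_one]

lemma inv_left {n : G} (hn : n ∈ nucleusSet Q.mul) :
    ∀ x y, Q.mul (Q.mul (Q.ldiv n Q.e) x) y = Q.mul (Q.ldiv n Q.e) (Q.mul x y) := by
  have hl : ∀ x y, Q.mul (Q.mul n x) y = Q.mul n (Q.mul x y) := hn.1.1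
  intro x y
  apply Q.lcancel (n := n)
  simp only [← hl, Q.mul_ldiv, Q.one_mul]

lemma inv_right {n : G} (hn : n ∈ nucleusSet Q.mul) :
    ∀ x y, Q.mul (Q.mul x y) (Q.ldiv n Q.e) = Q.mul x (Q.mul y (Q.ldiv n Q.e)) := by
  have hl : ∀ x y, Q.mul (Q.mul n x) y = Q.mul n (Q.mul x y) := hn.1.1
  have hr : ∀ x y, Q.mul (Q.mul x y) n = Q.mul x (Q.mul y n) := hn.2
  have hmn : Q.mul (Q.ldiv n Q.e) n = Q.e := Q.inv_mul_self hl
  intro x y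
  apply Q.rcancel (n := n)
  simp only [hr, hmn, Q.mul_one]

end FanQuasigroup

/-- in a fan quasigroup, for all `a, b`:
(i) `(ab)\e = ((b\e)·(a\e))·[t(a, b, b\e)]⁻¹·t(ab, b\e, a\e)` and
(ii) `e/(ab) = [p(e/b, e/a, ab)]⁻¹·p(e/a, a, b)·((e/b)·(e/a))` (inverses in the
group `N(G)`, i.e. `x⁻¹ = x\e`). -/
theorem stmt_16 {G : Type*} (Q : FanQuasigroup G) (a b : G) :
    Q.ldiv (Q.mul a b) Q.e =
      Q.mul (Q.mul (Q.mul (Q.ldiv b Q.e) (Q.ldiv a Q.e))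
          (Q.inv (Q.t a b (Q.ldiv b Q.e))))
        (Q.t (Q.mul a b) (Q.ldiv b Q.e) (Q.ldiv a Q.e)) ∧
    Q.rdiv Q.e (Q.mul a b) =
      Q.mul (Q.mul (Q.inv (Q.p (Q.rdiv Q.e b) (Q.rdiv Q.e a) (Q.mul a b)))
          (Q.p (Q.rdiv Q.e a) a b))
        (Q.mul (Q.rdiv Q.e b) (Q.rdiv Q.e a)) := by
  constructor
  · -- part (i)
    simp only [FanQuasigroup.inv]
    have ht1l : ∀ x y, Q.mul (Q.mul (Q.t a b (Q.ldiv b Q.e)) x) y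
        = Q.mul (Q.t a b (Q.ldiv b Q.e)) (Q.mul x y) := (Q.t_mem a b (Q.ldiv b Q.e)).1.1
    have ht2l : ∀ x y,
        Q.mul (Q.mul (Q.t (Q.mul a b) (Q.ldiv b Q.e) (Q.ldiv a Q.e)) x) y
        = Q.mul (Q.t (Q.mul a b) (Q.ldiv b Q.e) (Q.ldiv a Q.e)) (Q.mul x y) :=
      (Q.t_mem (Q.mul a b) (Q.ldiv b Q.e) (Q.ldiv a Q.e)).1.1
    have ht2r : ∀ x y,
        Q.mul (Q.mul x y) (Q.t (Q.mul a b) (Q.ldiv b Q.e) (Q.ldiv a Q.e))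
        = Q.mul x (Q.mul y (Q.t (Q.mul a b) (Q.ldiv b Q.e) (Q.ldiv a Q.e))) :=
      (Q.t_mem (Q.mul a b) (Q.ldiv b Q.e) (Q.ldiv a Q.e)).2
    have ht1ir := Q.inv_right (Q.t_mem a b (Q.ldiv b Q.e))
    have step2 : Q.mul (Q.mul (Q.mul a b) (Q.ldiv b Q.e)) (Q.ldiv a Q.e)
        = Q.t a b (Q.ldiv b Q.e) := by
      rw [Q.t_spec a b (Q.ldiv b Q.e), Q.mul_ldiv b Q.e, Q.mul_one a,
        ht1l a (Q.ldiv a Q.e), Q.mul_ldiv a Q.e, Q.mul_one]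
    have step4 : Q.mul (Q.mul a b) (Q.mul (Q.ldiv b Q.e) (Q.ldiv a Q.e))
        = Q.ldiv (Q.t (Q.mul a b) (Q.ldiv b Q.e) (Q.ldiv a Q.e)) (Q.t a b (Q.ldiv b Q.e)) := by
      rw [← step2, Q.t_spec (Q.mul a b) (Q.ldiv b Q.e) (Q.ldiv a Q.e), Q.ldiv_mul]
    have key : Q.mul (Q.t (Q.mul a b) (Q.ldiv b Q.e) (Q.ldiv a Q.e))
        (Q.mul (Q.mul (Q.ldiv (Q.t (Q.mul a b) (Q.ldiv b Q.e) (Q.ldiv a Q.e)) (Q.t a b (Q.ldiv b Q.e)))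
            (Q.ldiv (Q.t a b (Q.ldiv b Q.e)) Q.e))
          (Q.t (Q.mul a b) (Q.ldiv b Q.e) (Q.ldiv a Q.e)))
        = Q.mul (Q.t (Q.mul a b) (Q.ldiv b Q.e) (Q.ldiv a Q.e)) Q.e := by
      rw [← ht2l, ← ht2l,
        Q.mul_ldiv (Q.t (Q.mul a b) (Q.ldiv b Q.e) (Q.ldiv a Q.e)) (Q.t a b (Q.ldiv b Q.e)),
        Q.mul_ldiv (Q.t a b (Q.ldiv b Q.e)) Q.e, Q.one_mul, Q.mul_one]
    have h5 := Q.lcancel key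
    have h : Q.mul (Q.mul a b)
        (Q.mul (Q.mul (Q.mul (Q.ldiv b Q.e) (Q.ldiv a Q.e)) (Q.ldiv (Q.t a b (Q.ldiv b Q.e)) Q.e))
          (Q.t (Q.mul a b) (Q.ldiv b Q.e) (Q.ldiv a Q.e))) = Q.e := by
      rw [← ht2r, ← ht1ir (Q.mul a b) (Q.mul (Q.ldiv b Q.e) (Q.ldiv a Q.e)), step4]
      exact h5
    conv_lhs => rw [← h]
    rw [Q.ldiv_mul]
  · -- part (ii)
    simp only [FanQuasigroup.inv]
    have hp1l : ∀ x y, Q.mul (Q.mul (Q.p (Q.rdiv Q.e a) a b) x) y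
        = Q.mul (Q.p (Q.rdiv Q.e a) a b) (Q.mul x y) := (Q.p_mem (Q.rdiv Q.e a) a b).1.1
    have hp1r : ∀ x y, Q.mul (Q.mul x y) (Q.p (Q.rdiv Q.e a) a b)
        = Q.mul x (Q.mul y (Q.p (Q.rdiv Q.e a) a b)) := (Q.p_mem (Q.rdiv Q.e a) a b).2
    have hp2l : ∀ x y, Q.mul (Q.mul (Q.p (Q.rdiv Q.e b) (Q.rdiv Q.e a) (Q.mul a b)) x) y
        = Q.mul (Q.p (Q.rdiv Q.e b) (Q.rdiv Q.e a) (Q.mul a b)) (Q.mul x y) :=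
      (Q.p_mem (Q.rdiv Q.e b) (Q.rdiv Q.e a) (Q.mul a b)).1.1
    have hp1ir := Q.inv_right (Q.p_mem (Q.rdiv Q.e a) a b)
    have hp2il := Q.inv_left (Q.p_mem (Q.rdiv Q.e b) (Q.rdiv Q.e a) (Q.mul a b))
    have hp1inv : Q.mul (Q.ldiv (Q.p (Q.rdiv Q.e a) a b) Q.e) (Q.p (Q.rdiv Q.e a) a b) = Q.e :=
      Q.inv_mul_self hp1l
    have hp2inv : Q.mul (Q.ldiv (Q.p (Q.rdiv Q.e b) (Q.rdiv Q.e a) (Q.mul a b)) Q.e)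
        (Q.p (Q.rdiv Q.e b) (Q.rdiv Q.e a) (Q.mul a b)) = Q.e := Q.inv_mul_self hp2l
    have s2 : Q.mul (Q.mul (Q.rdiv Q.e a) (Q.mul a b)) (Q.p (Q.rdiv Q.e a) a b) = b :=
      (Q.p_spec (Q.rdiv Q.e a) a b).symm.trans (by rw [Q.rdiv_mul, Q.one_mul])
    have s34 : Q.mul (Q.rdiv Q.e a) (Q.mul a b)
        = Q.mul b (Q.ldiv (Q.p (Q.rdiv Q.e a) a b) Q.e) := by
      apply Q.rcancel (n := Q.p (Q.rdiv Q.e a) a b)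
      rw [s2, hp1r, hp1inv, Q.mul_one]
    have s5 : Q.mul (Q.mul (Q.rdiv Q.e b) (Q.rdiv Q.e a)) (Q.mul a b)
        = Q.mul (Q.ldiv (Q.p (Q.rdiv Q.e a) a b) Q.e)
            (Q.p (Q.rdiv Q.e b) (Q.rdiv Q.e a) (Q.mul a b)) := by
      rw [Q.p_spec (Q.rdiv Q.e b) (Q.rdiv Q.e a) (Q.mul a b), s34,
        ← hp1ir (Q.rdiv Q.e b) b, Q.rdiv_mul, Q.one_mul]
    have h : Q.mul (Q.mul (Q.mul (Q.ldiv (Q.p (Q.rdiv Q.e b) (Q.rdiv Q.e a) (Q.mul a b)) Q.e)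
          (Q.p (Q.rdiv Q.e a) a b)) (Q.mul (Q.rdiv Q.e b) (Q.rdiv Q.e a))) (Q.mul a b) = Q.e := by
      rw [hp2il, hp2il, hp1l, s5, ← hp1l,
        Q.mul_ldiv (Q.p (Q.rdiv Q.e a) a b) Q.e, Q.one_mul]
      exact hp2inv
    conv_lhs => rw [← h]
    rw [Q.mul_rdiv]
end

section
/- Let G be a fan quasigroup with neutral element e and maps t, p. Then for all a, b, c ∈ G: (i) b·(e/a) = (b/a)·p(b/a, a, a\e)·[p(e/a, a, a\e)]⁻¹; (ii) b/a = [t(b, e/a, a)]⁻¹·(b·(e/a)); (iii) a/(bc) = t(a/(bc), b, c)·((a/c)/b); (iv) c·(b/a) = t(c, b/a, a)·((cb)/a), where inverses are taken in the group N(G). -/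
private lemma FanQuasigroup.cancel_right {G : Type*} (Q : FanQuasigroup G) {u w v : G}
    (h : Q.mul u v = Q.mul w v) : u = w := by
  have := congrArg (fun z => Q.rdiv z v) h
  simpa [Q.mul_rdiv] using this

private lemma FanQuasigroup.inv_mul_s17 {G : Type*} (Q : FanQuasigroup G) {x : G}
    (hx : x ∈ nucleusSet Q.mul) : Q.mul (Q.inv x) x = Q.e := by
  obtain ⟨⟨_, hm⟩, _⟩ := hx
  apply Q.cancel_right (v := Q.inv x)
  rw [hm, FanQuasigroup.inv, Q.mul_ldiv, Q.mul_one, Q.one_mul]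

/-- in a fan quasigroup, for all `a, b, c`:
(i) `b·(e/a) = (b/a)·p(b/a, a, a\e)·[p(e/a, a, a\e)]⁻¹`;
(ii) `b/a = [t(b, e/a, a)]⁻¹·(b·(e/a))`;
(iii) `a/(bc) = t(a/(bc), b, c)·((a/c)/b)`;
(iv) `c·(b/a) = t(c, b/a, a)·((cb)/a)` (inverses in the group `N(G)`,
i.e. `x⁻¹ = x\e`). -/
theorem stmt_17 {G : Type*} (Q : FanQuasigroup G) (a b c : G) :
    Q.mul b (Q.rdiv Q.e a) =
      Q.mul (Q.mul (Q.rdiv b a) (Q.p (Q.rdiv b a) a (Q.ldiv a Q.e)))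
        (Q.inv (Q.p (Q.rdiv Q.e a) a (Q.ldiv a Q.e))) ∧
    Q.rdiv b a =
      Q.mul (Q.inv (Q.t b (Q.rdiv Q.e a) a)) (Q.mul b (Q.rdiv Q.e a)) ∧
    Q.rdiv a (Q.mul b c) =
      Q.mul (Q.t (Q.rdiv a (Q.mul b c)) b c) (Q.rdiv (Q.rdiv a c) b) ∧
    Q.mul c (Q.rdiv b a) =
      Q.mul (Q.t c (Q.rdiv b a) a) (Q.rdiv (Q.mul c b) a) := by
  refine ⟨?_, ?_, ?_, ?_⟩
  · -- (i)
    set p1 := Q.p (Q.rdiv b a) a (Q.ldiv a Q.e) with hp1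
    set p2 := Q.p (Q.rdiv Q.e a) a (Q.ldiv a Q.e) with hp2
    obtain ⟨⟨_, _⟩, hr2⟩ := Q.p_mem (Q.rdiv Q.e a) a (Q.ldiv a Q.e)
    have hA : Q.mul b (Q.ldiv a Q.e) = Q.mul (Q.rdiv b a) p1 := by
      have := Q.p_spec (Q.rdiv b a) a (Q.ldiv a Q.e)
      rwa [Q.rdiv_mul, Q.mul_ldiv, Q.mul_one] at this
    have hB : Q.ldiv a Q.e = Q.mul (Q.rdiv Q.e a) p2 := by
      have := Q.p_spec (Q.rdiv Q.e a) a (Q.ldiv a Q.e)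
      rwa [Q.rdiv_mul, Q.mul_ldiv, Q.mul_one, Q.one_mul] at this
    apply Q.cancel_right (v := p2)
    rw [hr2 b (Q.rdiv Q.e a), ← hB, hA,
      hr2 (Q.mul (Q.rdiv b a) p1) (Q.inv p2), Q.inv_mul_s17 (Q.p_mem _ _ _), Q.mul_one]
  · -- (ii)
    set t2 := Q.t b (Q.rdiv Q.e a) a with ht2
    obtain ⟨⟨hl, hm⟩, _⟩ := Q.t_mem b (Q.rdiv Q.e a) a
    have h1 : Q.mul t2 (Q.rdiv b a) = Q.mul b (Q.rdiv Q.e a) := by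
      apply Q.cancel_right (v := a)
      rw [hl, Q.rdiv_mul, Q.t_spec, Q.rdiv_mul, Q.mul_one]
    rw [← h1, ← hm, Q.inv_mul_s17 (Q.t_mem _ _ _), Q.one_mul]
  · -- (iii)
    set d := Q.rdiv a (Q.mul b c) with hd
    set t3 := Q.t d b c with ht3
    obtain ⟨⟨hl, _⟩, _⟩ := Q.t_mem d b c
    have h1 : Q.mul d b = Q.mul t3 (Q.rdiv a c) := by
      apply Q.cancel_right (v := c)
      rw [hl, Q.rdiv_mul, Q.t_spec, Q.rdiv_mul]
    apply Q.cancel_right (v := b)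
    rw [h1, hl, Q.rdiv_mul]
  · -- (iv)
    obtain ⟨⟨hl, _⟩, _⟩ := Q.t_mem c (Q.rdiv b a) a
    apply Q.cancel_right (v := a)
    rw [Q.t_spec, Q.rdiv_mul, hl, Q.rdiv_mul]
end
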